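/- arXiv:1309.7598 — 2 statements merged into one kernel-verified Lean document; each statement's English description precedes it below -/
import Mathlib

section
/- Let μ be the probability measure on ℝ whose cumulative distribution function is F(t) = exp(−exp(−(t + c))), where c is the Euler–Mascheroni constant. Then μ has finite second moment and its variance equals π²/6, i.e. ∫ t² dμ(t) − (∫ t dμ(t))² = π²/6. -/
/-!
Substituting `u = exp (-(t + c))` turns the Gumbel law into the law of `-log U - c` with `U`
standard exponential, so its variance is that of `log U`: the value at `s = 1` of the
variance `V s` of `log T` for `T ~ Gamma(s, 1)`. Integrating by parts in
`∫ e⁻ᵗ tˢ⁻¹ (log t)ᵏ dt` gives `V (s + 1) = V s - 1 / s²`, and `(log x)² ≤ x + x⁻¹ - 2`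
gives `0 ≤ V s ≤ 1 / (s - 1)`. Telescoping, `V 1 = ∑ 1 / n² = π² / 6`.
-/

open MeasureTheory Real Set Filter Topology

namespace Real

lemma abs_log_pow_le {t δ : ℝ} (ht : 0 < t) (hδ : 0 < δ) (k : ℕ) :
    |log t| ^ k ≤ (t ^ (k * δ) + t ^ (-(k * δ))) / δ ^ k := by
  have hpow (x : ℝ) (hx : 0 < x) : x ^ (k * δ) = (x ^ δ) ^ k := by
    rw [← rpow_natCast, ← rpow_mul hx.le, mul_comm]
  have hpos (e : ℝ) : 0 ≤ t ^ e := (rpow_pos_of_pos ht e).le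
  rcases le_or_gt 1 t with h | h
  · have hlog : |log t| ≤ t ^ δ / δ := by
      rw [abs_of_nonneg (log_nonneg h)]; exact log_le_rpow_div ht.le hδ
    calc |log t| ^ k ≤ (t ^ δ / δ) ^ k := by gcongr
      _ = t ^ (k * δ) / δ ^ k := by rw [div_pow, hpow t ht]
      _ ≤ _ := by gcongr; linarith [hpos (-(k * δ))]
  · have hlog : |log t| ≤ t⁻¹ ^ δ / δ := by
      rw [abs_of_nonpos (log_nonpos ht.le h.le), ← log_inv]
      exact log_le_rpow_div (inv_pos.2 ht).le hδ
    calc |log t| ^ k ≤ (t⁻¹ ^ δ / δ) ^ k := by gcongr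
      _ = t ^ (-(k * δ)) / δ ^ k := by
        rw [div_pow, ← hpow _ (inv_pos.2 ht), inv_rpow ht.le, rpow_neg ht.le]
      _ ≤ _ := by gcongr; linarith [hpos (k * δ)]

/-- The `k`-th derivative of `Γ` at `s`, in integral form. -/
noncomputable def logPowGammaIntegral (k : ℕ) (s : ℝ) : ℝ :=
  ∫ t in Ioi 0, exp (-t) * t ^ (s - 1) * log t ^ k

lemma logPowGammaIntegral_convergent {s : ℝ} (hs : 0 < s) (k : ℕ) :
    IntegrableOn (fun t => exp (-t) * t ^ (s - 1) * log t ^ k) (Ioi 0) := by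
  set δ := s / (k + 1)
  have hδ : 0 < δ := by positivity
  have hkδ : k * δ < s := by
    rw [mul_div_assoc', div_lt_iff₀ (by positivity)]; linarith
  have hbound : IntegrableOn (fun t => (exp (-t) * t ^ (s + k * δ - 1)
      + exp (-t) * t ^ (s - k * δ - 1)) / δ ^ k) (Ioi 0) :=
    ((GammaIntegral_convergent (by positivity)).add
      (GammaIntegral_convergent (by linarith))).div_const _
  refine hbound.mono' (by fun_prop) ((ae_restrict_iff' measurableSet_Ioi).2 ?_)
  filter_upwards with t (ht : 0 < t)
  have hw : 0 < exp (-t) * t ^ (s - 1) := by positivity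
  calc ‖exp (-t) * t ^ (s - 1) * log t ^ k‖ = exp (-t) * t ^ (s - 1) * |log t| ^ k := by
        rw [norm_mul, norm_pow, norm_of_nonneg hw.le, norm_eq_abs]
    _ ≤ exp (-t) * t ^ (s - 1) * ((t ^ (k * δ) + t ^ (-(k * δ))) / δ ^ k) := by
        gcongr; exact abs_log_pow_le ht hδ k
    _ = _ := by
        rw [sub_eq_add_neg s (k * δ), add_sub_right_comm, add_sub_right_comm, rpow_add ht,
          rpow_add ht]
        ring

lemma logPowGammaIntegral_zero {s : ℝ} (hs : 0 < s) : logPowGammaIntegral 0 s = Gamma s := by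
  simp [logPowGammaIntegral, Gamma_eq_integral hs]

lemma tendsto_rpow_mul_log_pow_nhdsGT_zero {s : ℝ} (hs : 0 < s) (k : ℕ) :
    Tendsto (fun t => t ^ s * log t ^ (k + 1)) (𝓝[>] 0) (𝓝 0) := by
  have h := (tendsto_log_mul_rpow_nhdsGT_zero (r := s / (k + 1)) (by positivity)).pow (k + 1)
  rw [zero_pow (Nat.succ_ne_zero k)] at h
  refine h.congr' (eventually_nhdsWithin_of_forall fun t (ht : 0 < t) => ?_)
  rw [mul_pow, ← rpow_natCast (t ^ _), ← rpow_mul ht.le, mul_comm]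
  push_cast
  rw [div_mul_cancel₀ _ (by positivity)]

lemma tendsto_rpow_mul_log_pow_mul_exp_neg_atTop (s : ℝ) (k : ℕ) :
    Tendsto (fun t => t ^ s * log t ^ k * exp (-t)) atTop (𝓝 0) := by
  have h := (tendsto_pow_log_div_mul_add_atTop 1 0 k one_ne_zero).mul
    (tendsto_rpow_mul_exp_neg_mul_atTop_nhds_zero (s + 1) 1 one_pos)
  rw [zero_mul] at h
  refine h.congr' ((eventually_gt_atTop 0).mono fun t ht => ?_)
  rw [rpow_add_one ht.ne']
  field_simp
  ring_nf

lemma logPowGammaIntegral_succ_add_one {s : ℝ} (hs : 0 < s) (k : ℕ) :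
    logPowGammaIntegral (k + 1) (s + 1) =
      s * logPowGammaIntegral (k + 1) s + (k + 1) * logPowGammaIntegral k s := by
  set u : ℝ → ℝ := fun t => t ^ s * log t ^ (k + 1)
  set u' : ℝ → ℝ := fun t =>
    s * t ^ (s - 1) * log t ^ (k + 1) + (k + 1) * t ^ (s - 1) * log t ^ k
  have hu : ∀ t ∈ Ioi (0 : ℝ), HasDerivAt u (u' t) t := by
    intro t (ht : 0 < t)
    refine ((hasDerivAt_rpow_const (p := s) (Or.inl ht.ne')).mul
      ((hasDerivAt_log ht.ne').pow (k + 1))).congr_deriv ?_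
    simp only [u', rpow_sub_one ht.ne', Nat.add_sub_cancel, Pi.pow_apply]
    push_cast
    field_simp
  have hv : ∀ t ∈ Ioi (0 : ℝ), HasDerivAt (fun t => -exp (-t)) (exp (-t)) t := fun t _ =>
    ((hasDerivAt_neg t).exp.neg).congr_deriv (by ring)
  have I := logPowGammaIntegral_convergent hs
  have huv' : IntegrableOn (fun t => u t * exp (-t)) (Ioi 0) := by
    refine (logPowGammaIntegral_convergent (by linarith : 0 < s + 1) (k + 1)).congr_fun
      (fun t _ => ?_) measurableSet_Ioi
    simp only [u, add_sub_cancel_right]; ring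
  have hu'v : IntegrableOn (fun t => u' t * -exp (-t)) (Ioi 0) := by
    refine IntegrableOn.congr_fun (((I (k + 1)).const_mul s).add ((I k).const_mul (k + 1))).neg
      (fun t _ => ?_) measurableSet_Ioi
    simp only [u', Pi.neg_apply, Pi.add_apply]; ring
  have h0 : Tendsto (fun t => u t * -exp (-t)) (𝓝[>] 0) (𝓝 0) := by
    simpa using (tendsto_rpow_mul_log_pow_nhdsGT_zero hs k).mul
      (((continuous_exp.comp continuous_neg).neg.tendsto 0).mono_left nhdsWithin_le_nhds)
  have htop : Tendsto (fun t => u t * -exp (-t)) atTop (𝓝 0) := by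
    simpa [u, mul_assoc] using (tendsto_rpow_mul_log_pow_mul_exp_neg_atTop s (k + 1)).neg
  have h := integral_Ioi_mul_deriv_eq_deriv_mul hu hv huv' hu'v h0 htop
  have hleft : ∫ t in Ioi 0, u t * exp (-t) = logPowGammaIntegral (k + 1) (s + 1) :=
    setIntegral_congr_fun measurableSet_Ioi fun t _ => by
      simp only [u, add_sub_cancel_right]; ring
  have hright : ∫ t in Ioi 0, u' t * -exp (-t) =
      -(s * logPowGammaIntegral (k + 1) s + (k + 1) * logPowGammaIntegral k s) := by
    rw [setIntegral_congr_fun measurableSet_Ioi fun t _ => (by simp only [u']; ring :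
      u' t * -exp (-t) = -(s * (exp (-t) * t ^ (s - 1) * log t ^ (k + 1)) +
        (k + 1) * (exp (-t) * t ^ (s - 1) * log t ^ k))),
      integral_neg, integral_add ((I _).const_mul _) ((I _).const_mul _), integral_const_mul,
      integral_const_mul]
    rfl
  rw [hleft, hright] at h
  linarith

lemma integral_exp_neg_mul_rpow_mul_log_sub {s : ℝ} (hs : 0 < s) (c : ℝ) :
    ∫ t in Ioi 0, exp (-t) * t ^ (s - 1) * (log t - c) =
      logPowGammaIntegral 1 s - c * logPowGammaIntegral 0 s := by
  have I := logPowGammaIntegral_convergent hs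
  calc _ = ∫ t in Ioi 0, exp (-t) * t ^ (s - 1) * log t ^ 1 -
        c * (exp (-t) * t ^ (s - 1) * log t ^ 0) :=
        setIntegral_congr_fun measurableSet_Ioi fun t _ => by simp only [pow_one, pow_zero]; ring
    _ = _ := by rw [integral_sub (I 1) ((I 0).const_mul c), integral_const_mul]; rfl

lemma integrableOn_exp_neg_mul_rpow_mul_log_sub_sq {s : ℝ} (hs : 0 < s) (c : ℝ) :
    IntegrableOn (fun t => exp (-t) * t ^ (s - 1) * (log t - c) ^ 2) (Ioi 0) := by
  have I := logPowGammaIntegral_convergent hs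
  refine (((I 2).sub ((I 1).const_mul (2 * c))).add ((I 0).const_mul (c ^ 2))).congr_fun
    (fun t _ => ?_) measurableSet_Ioi
  simp only [Pi.add_apply, Pi.sub_apply, pow_one, pow_zero]; ring

lemma integral_exp_neg_mul_rpow_mul_log_sub_sq {s : ℝ} (hs : 0 < s) (c : ℝ) :
    ∫ t in Ioi 0, exp (-t) * t ^ (s - 1) * (log t - c) ^ 2 =
      logPowGammaIntegral 2 s - 2 * c * logPowGammaIntegral 1 s +
        c ^ 2 * logPowGammaIntegral 0 s := by
  have I := logPowGammaIntegral_convergent hs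
  calc _ = ∫ t in Ioi 0, exp (-t) * t ^ (s - 1) * log t ^ 2 -
        2 * c * (exp (-t) * t ^ (s - 1) * log t ^ 1) +
          c ^ 2 * (exp (-t) * t ^ (s - 1) * log t ^ 0) :=
        setIntegral_congr_fun measurableSet_Ioi fun t _ => by simp only [pow_one, pow_zero]; ring
    _ = _ := by
      rw [integral_add ?_ ((I 0).const_mul _), integral_sub (I 2) ((I 1).const_mul _),
        integral_const_mul, integral_const_mul]
      · rfl
      · exact (I 2).sub ((I 1).const_mul _)

/-- The variance of `log T` for a `Gamma(s, 1)`-distributed `T`. -/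
noncomputable def logGammaVariance (s : ℝ) : ℝ :=
  logPowGammaIntegral 2 s / logPowGammaIntegral 0 s -
    (logPowGammaIntegral 1 s / logPowGammaIntegral 0 s) ^ 2

lemma logGammaVariance_eq {s : ℝ} (hs : 0 < s) (c : ℝ) :
    logGammaVariance s = (∫ t in Ioi 0, exp (-t) * t ^ (s - 1) * (log t - c) ^ 2) / Gamma s -
      (logPowGammaIntegral 1 s / Gamma s - c) ^ 2 := by
  have hΓ := (Gamma_pos_of_pos hs).ne'
  rw [integral_exp_neg_mul_rpow_mul_log_sub_sq hs, logGammaVariance,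
    logPowGammaIntegral_zero hs]
  field_simp
  ring

lemma logGammaVariance_le {s : ℝ} (hs : 0 < s) (c : ℝ) :
    logGammaVariance s ≤ (∫ t in Ioi 0, exp (-t) * t ^ (s - 1) * (log t - c) ^ 2) / Gamma s :=
  (logGammaVariance_eq hs c).trans_le (sub_le_self _ (sq_nonneg _))

lemma logGammaVariance_nonneg {s : ℝ} (hs : 0 < s) : 0 ≤ logGammaVariance s := by
  rw [logGammaVariance_eq hs (logPowGammaIntegral 1 s / Gamma s), sub_self, sq, mul_zero,
    sub_zero]
  refine div_nonneg (setIntegral_nonneg measurableSet_Ioi fun t (ht : 0 < t) => ?_)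
    (Gamma_pos_of_pos hs).le
  positivity

lemma logGammaVariance_add_one {s : ℝ} (hs : 0 < s) :
    logGammaVariance (s + 1) = logGammaVariance s - 1 / s ^ 2 := by
  have h1 := logPowGammaIntegral_succ_add_one hs 0
  have h2 := logPowGammaIntegral_succ_add_one hs 1
  have hΓ := (Gamma_pos_of_pos hs).ne'
  simp only [zero_add, Nat.cast_zero, Nat.cast_one, one_add_one_eq_two] at h1 h2
  rw [logGammaVariance, logGammaVariance, h1, h2, logPowGammaIntegral_zero hs,
    logPowGammaIntegral_zero (by linarith), Gamma_add_one hs.ne']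
  field_simp
  ring

lemma log_sq_le_add_inv_sub_two {x : ℝ} (hx : 0 < x) : log x ^ 2 ≤ x + x⁻¹ - 2 := by
  set y := log x / 2
  have hy : y ^ 2 ≤ sinh y ^ 2 := by
    rcases le_total 0 y with h | h
    · exact pow_le_pow_left₀ h (self_le_sinh_iff.2 h) 2
    · nlinarith [sinh_le_self_iff.2 h]
  have hx' : x = exp y * exp y := by rw [← exp_add, add_halves, exp_log hx]
  calc log x ^ 2 = 4 * y ^ 2 := by ring
    _ ≤ 4 * sinh y ^ 2 := by gcongr
    _ = x + x⁻¹ - 2 := by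
      rw [sinh_eq, hx', exp_neg]
      field_simp
      ring

lemma integral_exp_neg_mul_rpow_mul_div_add_div_sub_two {s : ℝ} (hs : 1 < s) :
    ∫ t in Ioi 0, exp (-t) * t ^ (s - 1) * (t / s + s / t - 2) = Gamma s / (s - 1) := by
  have I (r : ℝ) (hr : 0 < r) := GammaIntegral_convergent hr
  have hs0 : 0 < s := by linarith
  have hs1 : 0 < s - 1 := by linarith
  calc _ = ∫ t in Ioi 0, s⁻¹ * (exp (-t) * t ^ (s + 1 - 1)) +
        s * (exp (-t) * t ^ (s - 1 - 1)) - 2 * (exp (-t) * t ^ (s - 1)) :=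
        setIntegral_congr_fun measurableSet_Ioi fun t (ht : 0 < t) => by
          rw [add_sub_cancel_right, rpow_sub_one ht.ne' (s - 1), rpow_sub_one ht.ne']
          field_simp
    _ = s⁻¹ * Gamma (s + 1) + s * Gamma (s - 1) - 2 * Gamma s := by
      rw [integral_sub ?_ ((I s hs0).const_mul _), integral_add ((I _ (by linarith)).const_mul _)
          ((I _ hs1).const_mul _), integral_const_mul, integral_const_mul, integral_const_mul,
        Gamma_eq_integral hs0, Gamma_eq_integral hs1, Gamma_eq_integral (by linarith)]
      exact ((I _ (by linarith)).const_mul _).add ((I _ hs1).const_mul _)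
    _ = Gamma s / (s - 1) := by
      have h := Gamma_add_one hs1.ne'
      rw [sub_add_cancel] at h
      rw [Gamma_add_one hs0.ne', h]
      field_simp
      ring

lemma logGammaVariance_le_inv_sub_one {s : ℝ} (hs : 1 < s) :
    logGammaVariance s ≤ 1 / (s - 1) := by
  have hs0 : 0 < s := by linarith
  have hΓ := Gamma_pos_of_pos hs0
  refine (logGammaVariance_le hs0 (log s)).trans ?_
  rw [div_le_iff₀ hΓ, one_div_mul_eq_div,
    ← integral_exp_neg_mul_rpow_mul_div_add_div_sub_two hs]
  refine setIntegral_mono_on (integrableOn_exp_neg_mul_rpow_mul_log_sub_sq hs0 _) ?_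
    measurableSet_Ioi fun t (ht : 0 < t) => ?_
  · refine Integrable.of_integral_ne_zero ?_
    rw [integral_exp_neg_mul_rpow_mul_div_add_div_sub_two hs]
    have := sub_pos.2 hs
    positivity
  · have h := log_sq_le_add_inv_sub_two (div_pos ht hs0)
    rw [log_div ht.ne' hs0.ne', inv_div] at h
    gcongr

lemma logGammaVariance_one : logGammaVariance 1 = π ^ 2 / 6 := by
  have hrec (n : ℕ) : logGammaVariance (n + 1) =
      logGammaVariance 1 - ∑ k ∈ Finset.range n, 1 / ((k : ℝ) + 1) ^ 2 := by
    induction n with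
    | zero => simp
    | succ n ih =>
      rw [Nat.cast_succ, logGammaVariance_add_one (by positivity), ih, Finset.sum_range_succ]
      ring
  have hlim : Tendsto (fun n : ℕ => logGammaVariance (n + 1)) atTop (𝓝 0) := by
    refine tendsto_of_tendsto_of_tendsto_of_le_of_le' tendsto_const_nhds
      tendsto_one_div_atTop_nhds_zero_nat
      (Eventually.of_forall fun n => logGammaVariance_nonneg (by positivity))
      ((eventually_gt_atTop 0).mono fun n hn => ?_)
    simpa using logGammaVariance_le_inv_sub_one (s := n + 1) (by simpa using hn)
  have hsum : Tendsto (fun n : ℕ => ∑ k ∈ Finset.range n, 1 / ((k : ℝ) + 1) ^ 2) atTop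
      (𝓝 (π ^ 2 / 6)) := by
    simpa using ((hasSum_nat_add_iff' 1).2 hasSum_zeta_two).tendsto_sum_nat
  have h := tendsto_nhds_unique ((tendsto_const_nhds.sub hsum).congr fun n => (hrec n).symm) hlim
  linarith

end Real

noncomputable def gumbelPDFReal (c t : ℝ) : ℝ := exp (-(t + c)) * exp (-exp (-(t + c)))

noncomputable def gumbelMeasure (c : ℝ) : Measure ℝ :=
  volume.withDensity fun t => ENNReal.ofReal (gumbelPDFReal c t)

section Gumbel

variable (c : ℝ)

lemma hasDerivAt_gumbelCDF (t : ℝ) :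
    HasDerivAt (fun t => exp (-exp (-(t + c)))) (gumbelPDFReal c t) t := by
  have h := (((hasDerivAt_id t).add_const c).neg.exp.neg).exp
  refine h.congr_deriv ?_
  simp [gumbelPDFReal, mul_comm]

lemma hasDerivWithinAt_exp_neg_add (t : ℝ) :
    HasDerivWithinAt (fun t => exp (-(t + c))) (-exp (-(t + c))) univ t :=
  ((((hasDerivAt_id t).add_const c).neg.exp).congr_deriv (by simp)).hasDerivWithinAt

lemma injOn_exp_neg_add : InjOn (fun t => exp (-(t + c))) univ := fun a _ b _ hab => by
  simpa using exp_injective hab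

lemma image_exp_neg_add : (fun t => exp (-(t + c))) '' univ = Ioi 0 := by
  rw [image_univ, ← range_exp]
  exact (Function.LeftInverse.surjective (g := fun t => -t - c) fun t => by ring).range_comp exp

lemma abs_deriv_smul_comp_exp_neg_add (f : ℝ → ℝ) (t : ℝ) :
    |-exp (-(t + c))| • (exp (-exp (-(t + c))) * f (-log (exp (-(t + c))) - c)) =
      gumbelPDFReal c t * f t := by
  rw [abs_neg, abs_of_pos (exp_pos _), log_exp, smul_eq_mul, gumbelPDFReal]
  ring_nf

lemma integral_gumbelPDFReal_mul (f : ℝ → ℝ) :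
    ∫ t, gumbelPDFReal c t * f t = ∫ u in Ioi 0, exp (-u) * f (-log u - c) := by
  rw [← image_exp_neg_add c, integral_image_eq_integral_abs_deriv_smul MeasurableSet.univ
    (fun t _ => hasDerivWithinAt_exp_neg_add c t) (injOn_exp_neg_add c), Measure.restrict_univ]
  simp_rw [abs_deriv_smul_comp_exp_neg_add]

lemma integrable_gumbelPDFReal_mul_iff (f : ℝ → ℝ) :
    Integrable (fun t => gumbelPDFReal c t * f t) ↔
      IntegrableOn (fun u => exp (-u) * f (-log u - c)) (Ioi 0) := by
  rw [← image_exp_neg_add c, integrableOn_image_iff_integrableOn_abs_deriv_smul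
    MeasurableSet.univ (fun t _ => hasDerivWithinAt_exp_neg_add c t) (injOn_exp_neg_add c),
    integrableOn_univ]
  simp_rw [abs_deriv_smul_comp_exp_neg_add]

lemma integrable_gumbelPDFReal : Integrable (gumbelPDFReal c) := by
  simpa using (integrable_gumbelPDFReal_mul_iff c fun _ => 1).2
    (by simpa using integrableOn_exp_neg_Ioi 0)

lemma measurable_gumbelPDFReal : Measurable (gumbelPDFReal c) := by
  unfold gumbelPDFReal; fun_prop

lemma gumbelPDFReal_nonneg (t : ℝ) : 0 ≤ gumbelPDFReal c t := by
  unfold gumbelPDFReal; positivity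

lemma gumbelMeasure_Iic (a : ℝ) :
    gumbelMeasure c (Iic a) = ENNReal.ofReal (exp (-exp (-(a + c)))) := by
  have hbot : Tendsto (fun t => exp (-exp (-(t + c)))) atBot (𝓝 0) :=
    tendsto_exp_atBot.comp <| tendsto_neg_atTop_atBot.comp <| tendsto_exp_atTop.comp <|
      tendsto_neg_atBot_atTop.comp <| tendsto_atBot_add_const_right _ c tendsto_id
  rw [gumbelMeasure, withDensity_apply _ measurableSet_Iic, ← ofReal_integral_eq_lintegral_ofReal
    (integrable_gumbelPDFReal c).integrableOn (ae_of_all _ (gumbelPDFReal_nonneg c)),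
    integral_Iic_of_hasDerivAt_of_tendsto' (fun t _ => hasDerivAt_gumbelCDF c t)
      (integrable_gumbelPDFReal c).integrableOn hbot, sub_zero]

lemma integral_gumbelMeasure (f : ℝ → ℝ) :
    ∫ t, f t ∂gumbelMeasure c = ∫ u in Ioi 0, exp (-u) * f (-log u - c) := by
  rw [gumbelMeasure, integral_withDensity_eq_integral_toReal_smul
    (measurable_gumbelPDFReal c).ennreal_ofReal (ae_of_all _ fun _ => ENNReal.ofReal_lt_top),
    ← integral_gumbelPDFReal_mul]
  simp_rw [ENNReal.toReal_ofReal (gumbelPDFReal_nonneg c _), smul_eq_mul]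

lemma integrable_gumbelMeasure_iff (f : ℝ → ℝ) :
    Integrable f (gumbelMeasure c) ↔
      IntegrableOn (fun u => exp (-u) * f (-log u - c)) (Ioi 0) := by
  rw [gumbelMeasure, integrable_withDensity_iff_integrable_smul'
    (measurable_gumbelPDFReal c).ennreal_ofReal (ae_of_all _ fun _ => ENNReal.ofReal_lt_top),
    ← integrable_gumbelPDFReal_mul_iff]
  simp_rw [ENNReal.toReal_ofReal (gumbelPDFReal_nonneg c _), smul_eq_mul]

lemma exp_neg_mul_neg_log_sub_sq (u : ℝ) :
    exp (-u) * (-log u - c) ^ 2 = exp (-u) * u ^ ((1 : ℝ) - 1) * (log u - -c) ^ 2 := by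
  rw [sub_self, rpow_zero]; ring

lemma integrable_sq_gumbelMeasure : Integrable (fun t => t ^ 2) (gumbelMeasure c) := by
  rw [integrable_gumbelMeasure_iff]
  simp_rw [exp_neg_mul_neg_log_sub_sq]
  exact integrableOn_exp_neg_mul_rpow_mul_log_sub_sq one_pos _

lemma integral_sq_sub_sq_integral_gumbelMeasure :
    ∫ t, t ^ 2 ∂gumbelMeasure c - (∫ t, t ∂gumbelMeasure c) ^ 2 = logGammaVariance 1 := by
  have hmean : ∫ t, t ∂gumbelMeasure c =
      -(logPowGammaIntegral 1 1 - -c * logPowGammaIntegral 0 1) := by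
    rw [integral_gumbelMeasure, ← integral_exp_neg_mul_rpow_mul_log_sub one_pos, ← integral_neg]
    refine setIntegral_congr_fun measurableSet_Ioi fun u _ => ?_
    rw [sub_self, rpow_zero]; ring
  rw [integral_gumbelMeasure, hmean]
  simp_rw [exp_neg_mul_neg_log_sub_sq]
  rw [integral_exp_neg_mul_rpow_mul_log_sub_sq one_pos, logGammaVariance,
    logPowGammaIntegral_zero one_pos, Gamma_one]
  ring

end Gumbel

/-- If `μ` is the probability measure on `ℝ` whose cumulative distribution
function is `F t = exp (-exp (-(t + c)))`, with `c` the Euler–Mascheroni constant (i.e. the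
zero-mean Gumbel distribution), then `μ` has finite second moment and its variance is `π²/6`. -/
theorem gumbel_variance_pi_sq_div_six (μ : Measure ℝ) [IsProbabilityMeasure μ]
    (hcdf : ∀ t : ℝ,
      μ (Set.Iic t) = ENNReal.ofReal (exp (-exp (-(t + eulerMascheroniConstant))))) :
    Integrable (fun t : ℝ => t ^ 2) μ ∧
      (∫ t : ℝ, t ^ 2 ∂μ) - (∫ t : ℝ, t ∂μ) ^ 2 = π ^ 2 / 6 := by
  obtain rfl : μ = gumbelMeasure eulerMascheroniConstant :=
    Measure.ext_of_Iic _ _ fun t => by rw [hcdf, gumbelMeasure_Iic]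
  exact ⟨integrable_sq_gumbelMeasure _,
    (integral_sq_sub_sq_integral_gumbelMeasure _).trans logGammaVariance_one⟩
end

section
/- Let X = X_1 × ⋯ × X_n be a finite product space with each X_i a finite nonempty set, θ : X → ℝ, and Z = Σ_{x∈X} exp(θ(x)). Let α ⊆ {1,…,n} be a nonempty subset of the coordinates and write x_α = (x_i)_{i∈α}. Let {γ_α(x_α)} be independent zero-mean Gumbel random variables, one for each assignment x_α ∈ Π_{i∈α} X_i. Then log Z ≥ E_γ[ max_{x∈X} { θ(x) + γ_α(x_α) } ]. -/
/-!
Write `φ v` for the maximum of `θ` over the fibre `{x | x_α = v}`. Then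
`max_x (θ x + γ (x_α)) = max_v (φ v + γ v)`, and since
`∏_v F (t - φ v) = F (t - log ∑_v exp (φ v))` for the Gumbel CDF `F`, the maximum of
independent Gumbel variables shifted by `φ` is again Gumbel, with location shifted by
`log ∑_v exp (φ v) ≤ log Z`. The mean of a Gumbel variable `Y` of location `m` is `m + γ`:
`exp (-(Y - m))` is exponentially distributed and `E[log U] = Γ'(1) = -γ` for `U ~ Exp(1)`.
-/

open MeasureTheory Real ProbabilityTheory Set
open scoped ENNReal

-- `Γ'(1) = -γ`, with `Γ'` computed by differentiating Euler's integral.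
lemma integral_log_mul_exp_neg_Ioi :
    ∫ t in Ioi (0 : ℝ), log t * exp (-t) = -eulerMascheroniConstant := by
  have hΓ : HasDerivAt Complex.Gamma
      (∫ t : ℝ in Ioi 0, (t : ℂ) ^ ((1 : ℂ) - 1) * (log t * exp (-t))) 1 := by
    refine (Complex.hasDerivAt_GammaIntegral (by norm_num)).congr_of_eventuallyEq ?_
    filter_upwards [(isOpen_lt continuous_const Complex.continuous_re).mem_nhds
      (by norm_num : (0 : ℝ) < (1 : ℂ).re)] with s hs
    exact Complex.Gamma_eq_integral hs
  have hint : ∫ t : ℝ in Ioi 0, (t : ℂ) ^ ((1 : ℂ) - 1) * (log t * exp (-t))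
      = ((∫ t in Ioi (0 : ℝ), log t * exp (-t) : ℝ) : ℂ) := by
    rw [← integral_complex_ofReal]
    refine setIntegral_congr_fun measurableSet_Ioi fun t _ => ?_
    simp
  exact_mod_cast hint ▸ hΓ.unique Complex.hasDerivAt_Gamma_one

lemma integrableOn_log_mul_exp_neg_Ioi :
    IntegrableOn (fun t => log t * exp (-t)) (Ioi (0 : ℝ)) := by
  -- A non-integrable function would have integral `0`, but `γ ≠ 0`.
  by_contra h
  have := integral_undef h
  rw [integral_log_mul_exp_neg_Ioi] at this
  linarith [one_half_lt_eulerMascheroniConstant]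

lemma expMeasure_one_eq_withDensity :
    expMeasure 1 = (volume.restrict (Ici 0)).withDensity fun u => ENNReal.ofReal (exp (-u)) := by
  rw [← withDensity_indicator measurableSet_Ici, expMeasure, gammaMeasure]
  congr 1
  funext u
  by_cases hu : 0 ≤ u <;> simp [gammaPDF_eq, hu]

lemma integral_expMeasure_one (f : ℝ → ℝ) :
    ∫ u, f u ∂expMeasure 1 = ∫ u in Ioi 0, exp (-u) * f u := by
  rw [expMeasure_one_eq_withDensity, integral_withDensity_eq_integral_toReal_smul
    (by fun_prop) (by simp), integral_Ici_eq_integral_Ioi]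
  simp [ENNReal.toReal_ofReal (exp_pos _).le]

lemma integrable_expMeasure_one_iff (f : ℝ → ℝ) :
    Integrable f (expMeasure 1) ↔ IntegrableOn (fun u => exp (-u) * f u) (Ioi 0) := by
  rw [expMeasure_one_eq_withDensity, integrable_withDensity_iff_integrable_smul'
    (by fun_prop) (by simp), ← IntegrableOn, integrableOn_Ici_iff_integrableOn_Ioi]
  simp [ENNReal.toReal_ofReal (exp_pos _).le]

lemma integrable_log_expMeasure_one : Integrable log (expMeasure 1) := by
  rw [integrable_expMeasure_one_iff]
  simpa only [mul_comm] using integrableOn_log_mul_exp_neg_Ioi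

lemma integral_log_expMeasure_one : ∫ u, log u ∂expMeasure 1 = -eulerMascheroniConstant := by
  rw [integral_expMeasure_one]
  simpa only [mul_comm] using integral_log_mul_exp_neg_Ioi

lemma expMeasure_one_Ici {s : ℝ} (hs : 0 ≤ s) :
    expMeasure 1 (Ici s) = ENNReal.ofReal (exp (-s)) := by
  rw [expMeasure_one_eq_withDensity, withDensity_apply _ measurableSet_Ici,
    Measure.restrict_restrict measurableSet_Ici, inter_eq_left.2 (Ici_subset_Ici.2 hs),
    ← ofReal_integral_eq_lintegral_ofReal, integral_Ici_eq_integral_Ioi, integral_exp_neg_Ioi]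
  · rw [← IntegrableOn, integrableOn_Ici_iff_integrableOn_Ioi]
    simpa using exp_neg_integrableOn_Ioi s one_pos
  · exact Filter.Eventually.of_forall fun u => (exp_pos _).le

noncomputable def gumbelCDF (m t : ℝ) : ℝ := exp (-exp (-(t - m)))

lemma prod_gumbelCDF_sub {ι : Type*} [Fintype ι] [Nonempty ι] (m t : ℝ) (φ : ι → ℝ) :
    ∏ v, gumbelCDF m (t - φ v) = gumbelCDF (m + log (∑ v, exp (φ v))) t := by
  have hpos : 0 < ∑ v, exp (φ v) := Finset.sum_pos (fun v _ => exp_pos _) Finset.univ_nonempty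
  simp only [gumbelCDF, ← exp_sum]
  rw [show -(t - (m + log (∑ v, exp (φ v)))) = -(t - m) + log (∑ v, exp (φ v)) by ring,
    exp_add, exp_log hpos, Finset.mul_sum, ← Finset.sum_neg_distrib]
  refine congrArg exp (Finset.sum_congr rfl fun v _ => ?_)
  rw [← exp_add]
  ring_nf

section Gumbel

variable {Ω : Type*} [MeasurableSpace Ω] {P : Measure Ω} {m : ℝ}

lemma measure_iSup_add_le_of_iIndepFun {ι : Type*} [Fintype ι] [Nonempty ι] {γ : ι → Ω → ℝ}
    (hindep : iIndepFun γ P)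
    (hcdf : ∀ v t, P {ω | γ v ω ≤ t} = ENNReal.ofReal (gumbelCDF m t)) (φ : ι → ℝ) (t : ℝ) :
    P {ω | ⨆ v, φ v + γ v ω ≤ t} = ENNReal.ofReal (gumbelCDF (m + log (∑ v, exp (φ v))) t) := by
  have hset : {ω | ⨆ v, φ v + γ v ω ≤ t} = ⋂ v, γ v ⁻¹' Iic (t - φ v) := by
    ext ω
    simp [ciSup_le_iff (Finite.bddAbove_range _), le_sub_iff_add_le']
  rw [hset, hindep.meas_iInter fun v => ⟨Iic (t - φ v), measurableSet_Iic, rfl⟩,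
    ← prod_gumbelCDF_sub,
    ENNReal.ofReal_prod_of_nonneg (f := fun v => gumbelCDF m (t - φ v)) fun v _ => (exp_pos _).le]
  exact Finset.prod_congr rfl fun v _ => hcdf v (t - φ v)

variable [IsProbabilityMeasure P] {Y : Ω → ℝ}

lemma map_exp_neg_sub_eq_expMeasure (hY : Measurable Y)
    (hcdf : ∀ t, P {ω | Y ω ≤ t} = ENNReal.ofReal (gumbelCDF m t)) :
    P.map (fun ω => exp (-(Y ω - m))) = expMeasure 1 := by
  have hU : Measurable fun ω => exp (-(Y ω - m)) := by fun_prop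
  have : IsProbabilityMeasure (P.map fun ω => exp (-(Y ω - m))) :=
    Measure.isProbabilityMeasure_map hU.aemeasurable
  have : IsProbabilityMeasure (expMeasure 1) := isProbabilityMeasure_expMeasure one_pos
  refine Measure.ext_of_Ici _ _ fun s => ?_
  rw [Measure.map_apply hU measurableSet_Ici]
  rcases le_or_gt s 0 with hs | hs
  · have hpre : (fun ω => exp (-(Y ω - m))) ⁻¹' Ici s = univ :=
      eq_univ_of_forall fun ω => hs.trans (exp_pos _).le
    refine hpre ▸ measure_univ.trans (le_antisymm ?_ prob_le_one)
    simpa [expMeasure_one_Ici le_rfl] using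
      measure_mono (μ := expMeasure 1) (Ici_subset_Ici.2 hs)
  · have hpre : (fun ω => exp (-(Y ω - m))) ⁻¹' Ici s = {ω | Y ω ≤ m - log s} := by
      ext ω
      simp only [mem_preimage, mem_Ici, mem_ofPred_eq, ← log_le_iff_le_exp hs]
      constructor <;> intro h <;> linarith
    rw [hpre, hcdf, expMeasure_one_Ici hs.le, gumbelCDF, sub_sub_cancel_left, neg_neg,
      exp_log hs]

lemma integral_eq_of_gumbelCDF (hY : Measurable Y)
    (hcdf : ∀ t, P {ω | Y ω ≤ t} = ENNReal.ofReal (gumbelCDF m t)) :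
    ∫ ω, Y ω ∂P = m + eulerMascheroniConstant := by
  have hU : Measurable fun ω => exp (-(Y ω - m)) := by fun_prop
  have hlog : Measurable fun u => m - log u := measurable_const.sub measurable_log
  have : IsProbabilityMeasure (expMeasure 1) := isProbabilityMeasure_expMeasure one_pos
  calc ∫ ω, Y ω ∂P = ∫ ω, m - log (exp (-(Y ω - m))) ∂P := by simp [log_exp]
    _ = ∫ u, m - log u ∂(P.map fun ω => exp (-(Y ω - m))) :=
      (integral_map hU.aemeasurable hlog.aestronglyMeasurable).symm
    _ = m + eulerMascheroniConstant := by
      rw [map_exp_neg_sub_eq_expMeasure hY hcdf,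
        integral_sub (integrable_const m) integrable_log_expMeasure_one,
        integral_log_expMeasure_one]
      simp

lemma integral_iSup_add_of_iIndepFun {ι : Type*} [Fintype ι] [Nonempty ι] {γ : ι → Ω → ℝ}
    (hmeas : ∀ v, Measurable (γ v)) (hindep : iIndepFun γ P)
    (hcdf : ∀ v t, P {ω | γ v ω ≤ t} = ENNReal.ofReal (gumbelCDF m t)) (φ : ι → ℝ) :
    ∫ ω, ⨆ v, φ v + γ v ω ∂P = m + eulerMascheroniConstant + log (∑ v, exp (φ v)) := by
  rw [integral_eq_of_gumbelCDF (Measurable.iSup fun v => (hmeas v).const_add (φ v))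
    (measure_iSup_add_le_of_iIndepFun hindep hcdf φ)]
  ring

end Gumbel

section FiberSup

variable {β ι : Type*} (r : β → ι) (θ : β → ℝ)

noncomputable def fiberSup (v : ι) : ℝ := ⨆ x : {x // r x = v}, θ x

variable {r}

lemma exists_eq_fiberSup [Finite β] (hr : r.Surjective) (v : ι) :
    ∃ x, r x = v ∧ θ x = fiberSup r θ v := by
  obtain ⟨x, hx⟩ := hr v
  have : Nonempty {x // r x = v} := ⟨⟨x, hx⟩⟩
  obtain ⟨⟨y, hy⟩, hθ⟩ := exists_eq_ciSup_of_finite (f := fun x : {x // r x = v} => θ x)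
  exact ⟨y, hy, hθ⟩

lemma le_fiberSup [Finite β] (x : β) : θ x ≤ fiberSup r θ (r x) :=
  le_ciSup (f := fun x' : {x' // r x' = r x} => θ x') (Finite.bddAbove_range _) ⟨x, rfl⟩

lemma iSup_add_comp_eq_iSup_fiberSup [Finite β] [Finite ι] [Nonempty β] (hr : r.Surjective)
    (c : ι → ℝ) : ⨆ x, θ x + c (r x) = ⨆ v, fiberSup r θ v + c v := by
  have : Nonempty ι := .map r ‹_›
  apply le_antisymm
  · refine ciSup_le fun x => ?_
    calc θ x + c (r x) ≤ fiberSup r θ (r x) + c (r x) := by gcongr; exact le_fiberSup θ x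
      _ ≤ _ := le_ciSup (f := fun v => fiberSup r θ v + c v) (Finite.bddAbove_range _) (r x)
  · refine ciSup_le fun v => ?_
    obtain ⟨x, rfl, hx⟩ := exists_eq_fiberSup θ hr v
    exact hx ▸ le_ciSup (f := fun x => θ x + c (r x)) (Finite.bddAbove_range _) x

lemma sum_exp_fiberSup_le [Fintype β] [Fintype ι] [DecidableEq ι] (hr : r.Surjective) :
    ∑ v, exp (fiberSup r θ v) ≤ ∑ x, exp (θ x) := by
  rw [← Finset.sum_fiberwise Finset.univ r fun x => exp (θ x)]
  refine Finset.sum_le_sum fun v _ => ?_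
  obtain ⟨x, hxv, hx⟩ := exists_eq_fiberSup θ hr v
  rw [← hx]
  exact Finset.single_le_sum (fun x _ => (exp_pos (θ x)).le) (by simp [hxv])

end FiberSup

theorem log_partition_ge_expected_max_subset_perturbation_general
    {n : ℕ} (X : Fin n → Type*) [∀ i, Fintype (X i)] [∀ i, Nonempty (X i)]
    (θ : (∀ i, X i) → ℝ) (α : Finset (Fin n))
    {Ω : Type*} [MeasurableSpace Ω] (P : Measure Ω) [IsProbabilityMeasure P]
    (γ : ((i : α) → X i) → Ω → ℝ) (hmeas : ∀ v, Measurable (γ v))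
    (hindep : iIndepFun γ P)
    (hcdf : ∀ v t, P {ω | γ v ω ≤ t} =
      ENNReal.ofReal (exp (-exp (-(t + eulerMascheroniConstant))))) :
    ∫ ω, (⨆ x : ∀ i, X i, (θ x + γ (fun i => x i) ω)) ∂P ≤
      Real.log (∑ x : ∀ i, X i, exp (θ x)) := by
  classical
  have hr : (α.restrict : (∀ i, X i) → (i : α) → X i).Surjective := fun v =>
    ⟨fun i => if h : i ∈ α then v ⟨i, h⟩ else Classical.arbitrary _, by funext i; simp⟩
  have hgumbel : ∀ v t, P {ω | γ v ω ≤ t} =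
      ENNReal.ofReal (gumbelCDF (-eulerMascheroniConstant) t) := by
    simpa [gumbelCDF] using hcdf
  calc ∫ ω, (⨆ x : ∀ i, X i, (θ x + γ (α.restrict x) ω)) ∂P
      = ∫ ω, ⨆ v, fiberSup α.restrict θ v + γ v ω ∂P := by
        congr 1 with ω
        exact iSup_add_comp_eq_iSup_fiberSup θ hr fun v => γ v ω
    _ = log (∑ v, exp (fiberSup α.restrict θ v)) := by
        rw [integral_iSup_add_of_iIndepFun hmeas hindep hgumbel]
        ring
    _ ≤ log (∑ x, exp (θ x)) :=
        log_le_log (Finset.sum_pos (fun v _ => exp_pos _) Finset.univ_nonempty)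
          (sum_exp_fiberSup_le θ hr)

/-- Let `X = X₁ × ⋯ × Xₙ` be a finite product space, `θ : X → ℝ`,
`Z = ∑_x exp (θ x)`, and `α` a nonempty subset of the coordinates.  If `γ v`, one for each
assignment `v` to the coordinates in `α`, are independent zero-mean Gumbel random variables,
then `log Z ≥ E[max_x {θ x + γ (x_α)}]`. -/
theorem log_partition_ge_expected_max_subset_perturbation
    {n : ℕ} (X : Fin n → Type*) [∀ i, Fintype (X i)] [∀ i, Nonempty (X i)]
    (θ : (∀ i, X i) → ℝ) (α : Finset (Fin n)) (hα : α.Nonempty)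
    {Ω : Type*} [MeasurableSpace Ω] (P : Measure Ω) [IsProbabilityMeasure P]
    (γ : ((i : α) → X i) → Ω → ℝ) (hmeas : ∀ v, Measurable (γ v))
    (hindep : iIndepFun γ P)
    (hcdf : ∀ v t, P {ω | γ v ω ≤ t} =
      ENNReal.ofReal (exp (-exp (-(t + eulerMascheroniConstant))))) :
    ∫ ω, (⨆ x : ∀ i, X i, (θ x + γ (fun i => x i) ω)) ∂P ≤
      Real.log (∑ x : ∀ i, X i, exp (θ x)) :=
  log_partition_ge_expected_max_subset_perturbation_general X θ α P γ hmeas hindep hcdf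
end
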